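/- Let B₁A₁ = B₂A₂ with B_i of full column rank and A_i of full row rank, and let G ∈ ℝ^{k×d}. Define the AltLoRA B-step full-model update δ_i = −η G A_iᵀ(A_i A_iᵀ)⁻¹ A_i for i = 1,2. Then δ₁ = δ₂. -/
import Mathlib

open Matrix

lemma isUnit_of_rank_eq {r : ℕ} (M : Matrix (Fin r) (Fin r) ℝ) (h : M.rank = r) :
    IsUnit M := by
  rw [← Matrix.mulVec_surjective_iff_isUnit]
  have : LinearMap.range M.mulVecLin = ⊤ := by
    apply Submodule.eq_top_of_finrank_eq
    rw [← Matrix.rank, h]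
    simp [Module.finrank_fintype_fun_eq_card]
  intro y
  have := this ▸ LinearMap.mem_range (f := M.mulVecLin) (x := y)
  exact this.symm.mpr trivial

/-- transformation invariance of the AltLoRA B-step full-model update. -/
theorem altlora_B_step_transformation_invariant (k r d : ℕ)
    (B₁ B₂ : Matrix (Fin k) (Fin r) ℝ) (A₁ A₂ : Matrix (Fin r) (Fin d) ℝ)
    (G : Matrix (Fin k) (Fin d) ℝ) (η : ℝ)
    (hB₁ : B₁.rank = r) (hB₂ : B₂.rank = r) (hA₁ : A₁.rank = r) (hA₂ : A₂.rank = r)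
    (h : B₁ * A₁ = B₂ * A₂) :
    -η • (G * A₁ᵀ * (A₁ * A₁ᵀ)⁻¹ * A₁) = -η • (G * A₂ᵀ * (A₂ * A₂ᵀ)⁻¹ * A₂) := by
  -- B₂ᵀB₂ is invertible
  have hBtB : IsUnit (B₂ᵀ * B₂) :=
    isUnit_of_rank_eq _ (by rw [Matrix.rank_transpose_mul_self, hB₂])
  set M : Matrix (Fin r) (Fin r) ℝ := (B₂ᵀ * B₂)⁻¹ * (B₂ᵀ * B₁) with hM
  have hA2 : A₂ = M * A₁ := by
    have h2 : B₂ᵀ * B₂ * A₂ = B₂ᵀ * B₁ * A₁ := by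
      rw [Matrix.mul_assoc, Matrix.mul_assoc, h]
    calc A₂ = (B₂ᵀ * B₂)⁻¹ * (B₂ᵀ * B₂ * A₂) := by
              rw [← Matrix.mul_assoc, Matrix.nonsing_inv_mul _ (by
                rwa [← Matrix.isUnit_iff_isUnit_det]), Matrix.one_mul]
      _ = M * A₁ := by rw [h2, hM]; simp only [Matrix.mul_assoc]
  -- M is invertible since A₂ has full rank
  have hMunit : IsUnit M := by
    apply isUnit_of_rank_eq
    have h1 : A₂.rank ≤ M.rank := hA2 ▸ Matrix.rank_mul_le_left M A₁
    have h2 : M.rank ≤ r := Matrix.rank_le_width M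
    omega
  have hMdet : IsUnit M.det := Matrix.isUnit_iff_isUnit_det _ |>.mp hMunit
  have hA1At : IsUnit (A₁ * A₁ᵀ).det := by
    rw [← Matrix.isUnit_iff_isUnit_det]
    exact isUnit_of_rank_eq _ (by rw [Matrix.rank_self_mul_transpose, hA₁])
  have key : A₂ᵀ * (A₂ * A₂ᵀ)⁻¹ * A₂ = A₁ᵀ * (A₁ * A₁ᵀ)⁻¹ * A₁ := by
    rw [hA2]
    have hAA : M * A₁ * (M * A₁)ᵀ = M * (A₁ * A₁ᵀ) * Mᵀ := by
      rw [Matrix.transpose_mul]; simp only [Matrix.mul_assoc]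
    rw [hAA, Matrix.transpose_mul]
    rw [Matrix.mul_inv_rev, Matrix.mul_inv_rev]
    -- now: A₁ᵀ * Mᵀ * (Mᵀ⁻¹ * ((A₁*A₁ᵀ)⁻¹ * M⁻¹)) * (M * A₁)
    have hMt : Mᵀ * Mᵀ⁻¹ = 1 := Matrix.mul_nonsing_inv _ (by rwa [Matrix.det_transpose])
    have hMi : M⁻¹ * M = 1 := Matrix.nonsing_inv_mul _ hMdet
    calc A₁ᵀ * Mᵀ * (Mᵀ⁻¹ * ((A₁ * A₁ᵀ)⁻¹ * M⁻¹)) * (M * A₁)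
        = A₁ᵀ * ((Mᵀ * Mᵀ⁻¹) * (A₁ * A₁ᵀ)⁻¹ * (M⁻¹ * M)) * A₁ := by
          simp only [Matrix.mul_assoc]
      _ = A₁ᵀ * (A₁ * A₁ᵀ)⁻¹ * A₁ := by rw [hMt, hMi, Matrix.one_mul, Matrix.mul_one,
          Matrix.mul_assoc]
  simp only [Matrix.mul_assoc] at key ⊢
  rw [key]
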